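/- Let p ∈ ℝ_max^n and q ∈ (ℝ ∪ {+∞})^n. Then the infimum over x ∈ ℝ^n of max( max_{i : p_i ∈ ℝ} (p_i − x_i), max_{i : q_i ∈ ℝ} (x_i − q_i) ) equals (1/2) · max_{i : p_i ∈ ℝ and q_i ∈ ℝ} (p_i − q_i), where both sides are elements of ℝ ∪ {−∞} and the maximum over an empty set is −∞. (In max-plus notation: inf_{x ∈ ℝ^n} (x^- ⊗ p ⊕ q^- ⊗ x) = (q^- ⊗ p)^{⊗ 1/2}.) -/

import Mathlib

/-!
Since `p i - q i = (p i - x i) + (x i - q i)`, every admissible term `p i - q i` is at most twice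
the objective at any `x`, which gives the lower bound. Conversely, put `x i` at the midpoint of
`p i` and `q i` when both are finite and at distance `t` from the finite one otherwise; then
the objective is at most the maximum of the right-hand side and `t`, for arbitrary real `t`.
The guards `p i ≠ ⊥` and `q i ≠ ⊤` can be dropped, because the guarded terms are `⊥` anyway.
-/

namespace EReal

lemma sub_le_two_mul_sub_sup_sub (p q : EReal) (x : ℝ) :
    p - q ≤ (2 : ℝ) * ((p - x) ⊔ (x - q)) := by
  induction p using EReal.rec <;> induction q using EReal.rec
  case coe.coe a b =>
    have h : a - b ≤ 2 * max (a - x) (x - b) := by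
      linarith [le_max_left (a - x) (x - b), le_max_right (a - x) (x - b)]
    rw [← coe_sub, ← coe_sub, ← coe_sub, ← coe_strictMono.monotone.map_sup, ← coe_mul]
    exact_mod_cast h
  all_goals simp [mul_top_of_pos]

lemma exists_sub_sup_sub_le {p q : EReal} (hp : p ≠ ⊤) (hq : q ≠ ⊥) (t : ℝ) :
    ∃ y : ℝ, (p - y) ⊔ (y - q) ≤ ((2⁻¹ : ℝ) : EReal) * (p - q) ⊔ t := by
  induction p using EReal.rec <;> induction q using EReal.rec
  case bot.top => exact ⟨0, by simp⟩
  case bot.coe b => exact ⟨b + t, by rw [← coe_sub, _root_.add_sub_cancel_left]; simp⟩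
  case coe.top a => exact ⟨a - t, by rw [← coe_sub, _root_.sub_sub_cancel]; simp⟩
  case coe.coe a b =>
    refine ⟨(a + b) / 2, le_sup_of_le_left (le_of_eq ?_)⟩
    rw [← coe_sub, ← coe_sub, ← coe_sub, ← coe_strictMono.monotone.map_sup, ← coe_mul]
    congr 1
    rw [max_eq_left] <;> linarith
  all_goals simp_all

lemma iSup_ne_bot_sub (a b : EReal) : (⨆ _ : a ≠ ⊥, a - b) = a - b := by
  by_cases ha : a = ⊥
  · simp [ha]
  · exact iSup_pos ha

lemma iSup_ne_top_sub (a b : EReal) : (⨆ _ : b ≠ ⊤, a - b) = a - b := by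
  by_cases hb : b = ⊤
  · simp [hb]
  · exact iSup_pos hb

lemma le_of_forall_le_sup_coe {a b : EReal} (h : ∀ t : ℝ, a ≤ b ⊔ t) : a ≤ b := by
  by_contra! hba
  obtain ⟨t, -, hta⟩ := lt_iff_exists_real_btwn.1 hba
  exact (h t).not_gt (sup_lt_iff.2 ⟨hba, hta⟩)

theorem iInf_iSup_sub_sup_sub {ι : Type*} (p q : ι → EReal) (hp : ∀ i, p i ≠ ⊤)
    (hq : ∀ i, q i ≠ ⊥) :
    ⨅ x : ι → ℝ, ⨆ i, (p i - x i) ⊔ (x i - q i) = ((2⁻¹ : ℝ) : EReal) * ⨆ i, (p i - q i) := by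
  have half_nonneg : (0 : EReal) ≤ ((2⁻¹ : ℝ) : EReal) := by norm_num
  apply le_antisymm
  · refine le_of_forall_le_sup_coe fun t => ?_
    choose y hy using fun i => exists_sub_sup_sub_le (hp i) (hq i) t
    refine iInf_le_of_le y (iSup_le fun i => (hy i).trans (sup_le_sup_right ?_ _))
    exact mul_le_mul_of_nonneg_left (le_iSup (fun i => p i - q i) i) half_nonneg
  · refine le_iInf fun x => ?_
    have h : ⨆ i, (p i - q i) ≤ ((2 : ℝ) : EReal) * ⨆ i, (p i - x i) ⊔ (x i - q i) :=
      iSup_le fun i => (sub_le_two_mul_sub_sup_sub (p i) (q i) (x i)).trans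
        (mul_le_mul_of_nonneg_left (le_iSup (fun i => (p i - x i) ⊔ (x i - q i)) i) (by norm_num))
    calc ((2⁻¹ : ℝ) : EReal) * ⨆ i, (p i - q i)
        ≤ ((2⁻¹ : ℝ) : EReal) * (((2 : ℝ) : EReal) * ⨆ i, (p i - x i) ⊔ (x i - q i)) :=
          mul_le_mul_of_nonneg_left h half_nonneg
      _ = ⨆ i, (p i - x i) ⊔ (x i - q i) := by
          rw [← mul_assoc, ← coe_mul, inv_mul_cancel₀ two_ne_zero, coe_one, one_mul]

end EReal

theorem stmt7 (n : ℕ) (p q : Fin n → EReal)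
    (hp : ∀ i, p i ≠ ⊤) (hq : ∀ i, q i ≠ ⊥) :
    (⨅ x : Fin n → ℝ,
        (⨆ (i) (_ : p i ≠ ⊥), (p i - (x i : EReal))) ⊔
        (⨆ (i) (_ : q i ≠ ⊤), ((x i : EReal) - q i))) =
      (((2 : ℝ)⁻¹ : ℝ) : EReal) * ⨆ (i) (_ : p i ≠ ⊥) (_ : q i ≠ ⊤), (p i - q i) := by
  simp only [EReal.iSup_ne_bot_sub, EReal.iSup_ne_top_sub, ← iSup_sup_eq]
  exact EReal.iInf_iSup_sub_sup_sub p q hp hq
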